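/- Let (T, [·,·,·], α) be a regular Hom-Lie triple system over a commutative ring k with Char(k) ≠ 2, let L be a Lie algebra with Lie algebra automorphism α_L, and let ε : T → L be an imbedding. Let ζ : T∧T → L be the linear map determined by ζ(a∧b) = [ε(a), ε(b)]_L. Then A(T∧T) ⊆ ker(ζ); explicitly, ζ(D_{a,b}·(a∧b)) = 0 and ζ(D_{a,b}·(c∧d) + D_{c,d}·(a∧b)) = 0 for all a,b,c,d ∈ T. Consequently there is a well-defined linear map ⟨ε,ε⟩ : ⟨T,T⟩ → L with ⟨ε,ε⟩(⟨a,b⟩) = [ε(a),ε(b)]_L. -/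
import Mathlib


open TensorProduct

/-- The relations defining the exterior square: the span of the squares `a ⊗ a`. -/
def sqRel (k T : Type*) [CommRing k] [AddCommGroup T] [Module k T] :
    Submodule k (T ⊗[k] T) :=
  Submodule.span k {x | ∃ a : T, x = a ⊗ₜ[k] a}

/-- The exterior square `T ∧ T` of the `k`-module `T`. -/
abbrev Wedge (k T : Type*) [CommRing k] [AddCommGroup T] [Module k T] :=
  (T ⊗[k] T) ⧸ sqRel k T

/-- The wedge `a ∧ b ∈ T ∧ T`. -/
noncomputable def wedge {k T : Type*} [CommRing k] [AddCommGroup T] [Module k T]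
    (a b : T) : Wedge k T :=
  Submodule.Quotient.mk (a ⊗ₜ[k] b)

/-- The action `D · (x ∧ y) = D^{α⁻¹}(x) ∧ y + x ∧ D^{α⁻¹}(y)` of `End(T)` on `T ∧ T`. -/
noncomputable def act {k T : Type*} [CommRing k] [AddCommGroup T] [Module k T]
    (α : T ≃ₗ[k] T) (D : Module.End k T) (x y : T) : Wedge k T :=
  wedge (α.symm (D x)) y + wedge x (α.symm (D y))

/-- The submodule `A(T∧T)` spanned by `D_{a,b}·(a∧b)` and `D_{a,b}·(c∧d) + D_{c,d}·(a∧b)`. -/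
def ATT {k T : Type*} [CommRing k] [AddCommGroup T] [Module k T]
    (t : T →ₗ[k] T →ₗ[k] T →ₗ[k] T) (α : T ≃ₗ[k] T) : Submodule k (Wedge k T) :=
  Submodule.span k
    ({z | ∃ a b : T, z = act α (t a b) a b} ∪
      {z | ∃ a b c d : T, z = act α (t a b) c d + act α (t c d) a b})

/-- The quotient `⟨T,T⟩ = (T∧T)/A(T∧T)`. -/
abbrev QTT {k T : Type*} [CommRing k] [AddCommGroup T] [Module k T]
    (t : T →ₗ[k] T →ₗ[k] T →ₗ[k] T) (α : T ≃ₗ[k] T) :=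
  Wedge k T ⧸ ATT t α

/-- The coset `⟨a,b⟩ ∈ ⟨T,T⟩` of `a ∧ b`. -/
noncomputable def cls {k T : Type*} [CommRing k] [AddCommGroup T] [Module k T]
    (t : T →ₗ[k] T →ₗ[k] T →ₗ[k] T) (α : T ≃ₗ[k] T) (a b : T) : QTT t α :=
  Submodule.Quotient.mk (wedge a b)

/-- Let `(T, [·,·,·], α)` be a regular Hom-Lie triple system over a
commutative ring `k` with Char(k) ≠ 2, `L` a Lie algebra with automorphism `α_L`,
`ε : T → L` an imbedding, and `ζ : T∧T → L` the linear map with `ζ(a∧b) = [ε a, ε b]`.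
Then `A(T∧T) ⊆ ker ζ` (explicitly, `ζ` kills the spanning elements of `A(T∧T)`), and
consequently there is a well-defined linear map `⟨ε,ε⟩ : ⟨T,T⟩ → L` with
`⟨ε,ε⟩⟨a,b⟩ = [ε a, ε b]`. -/
theorem stmt15 {k T L : Type*} [CommRing k] [Invertible (2 : k)]
    [AddCommGroup T] [Module k T] [LieRing L] [LieAlgebra k L]
    (t : T →ₗ[k] T →ₗ[k] T →ₗ[k] T) (α : T ≃ₗ[k] T)
    (h1 : ∀ a b : T, t a a b = 0)
    (h2 : ∀ a b c : T, t a b c + t b c a + t c a b = 0)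
    (h3 : ∀ a b c d e : T, t (α a) (α b) (t c d e) =
      t (t a b c) (α d) (α e) + t (α c) (t a b d) (α e) + t (α c) (α d) (t a b e))
    (h4 : ∀ a b c : T, α (t a b c) = t (α a) (α b) (α c))
    (αL : L ≃ₗ[k] L) (hαL : ∀ x y : L, αL ⁅x, y⁆ = ⁅αL x, αL y⁆)
    (ε : T →ₗ[k] L)
    (hε1 : ∀ a : T, ε (α a) = αL (ε a))
    (hε2 : ∀ a b c : T, ε (t a b c) = αL ⁅⁅ε a, ε b⁆, ε c⁆)
    (ζ : Wedge k T →ₗ[k] L)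
    (hζ : ∀ a b : T, ζ (wedge a b) = ⁅ε a, ε b⁆) :
    (∀ x ∈ ATT t α, ζ x = 0) ∧
    (∀ a b : T, ζ (act α (t a b) a b) = 0) ∧
    (∀ a b c d : T, ζ (act α (t a b) c d + act α (t c d) a b) = 0) ∧
    (∃ φ : QTT t α →ₗ[k] L, ∀ a b : T, φ (cls t α a b) = ⁅ε a, ε b⁆) := by
  have hsymm : ∀ x : T, ε (α.symm x) = αL.symm (ε x) := by
    intro x
    have h := hε1 (α.symm x)
    rw [α.apply_symm_apply] at h
    rw [h, αL.symm_apply_apply]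
  have key : ∀ a b c d : T, ζ (act α (t a b) c d) = ⁅⁅ε a, ε b⁆, ⁅ε c, ε d⁆⁆ := by
    intro a b c d
    have hc : ε (α.symm (t a b c)) = ⁅⁅ε a, ε b⁆, ε c⁆ := by
      rw [hsymm, hε2, αL.symm_apply_apply]
    have hd : ε (α.symm (t a b d)) = ⁅⁅ε a, ε b⁆, ε d⁆ := by
      rw [hsymm, hε2, αL.symm_apply_apply]
    simp only [act, map_add, hζ, hc, hd]
    exact (leibniz_lie _ _ _).symm
  have hA : ∀ a b : T, ζ (act α (t a b) a b) = 0 := by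
    intro a b; rw [key, lie_self]
  have hB : ∀ a b c d : T, ζ (act α (t a b) c d + act α (t c d) a b) = 0 := by
    intro a b c d
    rw [map_add, key, key]
    rw [← lie_skew ⁅ε a, ε b⁆ ⁅ε c, ε d⁆]
    abel
  have hker : ∀ x ∈ ATT t α, ζ x = 0 := by
    intro x hx
    induction hx using Submodule.span_induction with
    | mem y hy =>
      rcases hy with ⟨a, b, rfl⟩ | ⟨a, b, c, d, rfl⟩
      · exact hA a b
      · exact hB a b c d
    | zero => simp
    | add y z _ _ hy hz => rw [map_add, hy, hz, add_zero]
    | smul c y _ hy => rw [map_smul, hy, smul_zero]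
  refine ⟨hker, hA, hB, ⟨Submodule.liftQ (ATT t α) ζ
    (fun x hx => LinearMap.mem_ker.2 (hker x hx)), fun a b => ?_⟩⟩
  rw [cls, Submodule.liftQ_apply, hζ]
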